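/- arXiv:2605.09171 — 4 statements merged into one kernel-verified Lean document; each statement's English description precedes it below -/
import Mathlib

section
/- Let f : ℝⁿ → ℝ be σ-strongly convex with minimizer θ⋆, and let g : ℝⁿ → ℝ be L-Lipschitz with g(θ⋆) ≤ -ζ for some ζ > 0. If f(θ) - f(θ⋆) ≤ ε where ε ≤ σζ²/(2L²), then g(θ) ≤ 0. -/
/-!
Strong convexity gives quadratic growth away from the minimizer: since `θ⋆` minimizes `f`,
`σ/2 ‖θ - θ⋆‖² ≤ f θ - f θ⋆ ≤ ε ≤ σζ²/(2L²)`, so `‖θ - θ⋆‖ ≤ ζ / L`, and the Lipschitz bound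
then moves `g` by at most `ζ` from its value `g θ⋆ ≤ -ζ`.
-/

open Filter Topology

section UniformConvexOn

variable {E : Type*} [NormedAddCommGroup E] [NormedSpace ℝ E] {s : Set E} {φ : ℝ → ℝ}
  {f : E → ℝ} {x y : E}

lemma UniformConvexOn.one_sub_mul_le_sub_of_isMinOn (hf : UniformConvexOn s φ f)
    (hmin : IsMinOn f s y) (hx : x ∈ s) (hy : y ∈ s) {t : ℝ} (ht₀ : 0 < t) (ht₁ : t ≤ 1) :
    (1 - t) * φ ‖x - y‖ ≤ f x - f y := by
  have hseg : f y ≤ t * f x + (1 - t) * f y - t * (1 - t) * φ ‖x - y‖ :=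
    (hmin (hf.1 hx hy ht₀.le (sub_nonneg.2 ht₁) (by ring))).trans
      (hf.2 hx hy ht₀.le (sub_nonneg.2 ht₁) (by ring))
  refine le_of_mul_le_mul_left ?_ ht₀
  linarith

lemma UniformConvexOn.le_sub_of_isMinOn (hf : UniformConvexOn s φ f) (hmin : IsMinOn f s y)
    (hx : x ∈ s) (hy : y ∈ s) : φ ‖x - y‖ ≤ f x - f y := by
  have hlim : Tendsto (fun t : ℝ => (1 - t) * φ ‖x - y‖) (𝓝[>] 0) (𝓝 (φ ‖x - y‖)) := by
    have : Continuous fun t : ℝ => (1 - t) * φ ‖x - y‖ := by fun_prop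
    simpa using (this.tendsto 0).mono_left nhdsWithin_le_nhds
  refine le_of_tendsto hlim ?_
  filter_upwards [Ioo_mem_nhdsGT one_pos] with t ht
  exact hf.one_sub_mul_le_sub_of_isMinOn hmin hx hy ht.1 ht.2.le

end UniformConvexOn

/-- Proposition 1 (single constraint): if `f` is `σ`-strongly convex with global minimizer
`θ⋆`, `g` is `L`-Lipschitz with `g θ⋆ ≤ -ζ`, and `f θ - f θ⋆ ≤ ε ≤ σζ²/(2L²)`,
then `g θ ≤ 0`. -/
theorem screened_constraint_feasible
    {n : ℕ} (f g : EuclideanSpace ℝ (Fin n) → ℝ) (σ L ζ ε : ℝ)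
    (hσ : 0 < σ) (hL : 0 < L) (hζ : 0 < ζ)
    (hsc : ConvexOn ℝ Set.univ (fun θ => f θ - (σ / 2) * ‖θ‖ ^ 2))
    (θstar : EuclideanSpace ℝ (Fin n)) (hmin : ∀ θ, f θstar ≤ f θ)
    (hLip : ∀ x y, |g x - g y| ≤ L * ‖x - y‖)
    (hfeas : g θstar ≤ -ζ)
    (hε : ε ≤ σ * ζ ^ 2 / (2 * L ^ 2))
    (θ : EuclideanSpace ℝ (Fin n)) (hθ : f θ - f θstar ≤ ε) :
    g θ ≤ 0 := by
  have hgrowth : σ / 2 * ‖θ - θstar‖ ^ 2 ≤ σ * ζ ^ 2 / (2 * L ^ 2) :=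
    ((strongConvexOn_iff_convex.2 hsc).le_sub_of_isMinOn (fun z _ => hmin z) trivial trivial).trans
      (hθ.trans hε)
  have hsq : (L * ‖θ - θstar‖) ^ 2 ≤ ζ ^ 2 := by
    rw [le_div_iff₀ (by positivity)] at hgrowth
    nlinarith
  calc g θ ≤ g θstar + L * ‖θ - θstar‖ := by linarith [(le_abs_self _).trans (hLip θ θstar)]
    _ ≤ -ζ + ζ := add_le_add hfeas (le_of_sq_le_sq hsq hζ.le)
    _ = 0 := neg_add_cancel ζ
end

section
/- Let g ∈ ℝʳ, λ > 0, G ≥ 0, and x ∈ ℝʳ with an optimal subgradient g⋆ ∈ λ·∂‖·‖₁(x) satisfying ‖g⋆ - g‖₂ ≤ G. If for coordinate j it holds that |g_j| + G < λ, then x_j = 0. -/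
theorem Real.abs_sign_of_ne_zero {r : ℝ} (hr : r ≠ 0) : |Real.sign r| = 1 := by
  rcases Real.sign_apply_eq_of_ne_zero r hr with h | h <;> simp [h]

theorem abs_apply_le_sqrt_sum_sq {ι : Type*} [Fintype ι] (f : ι → ℝ) (j : ι) :
    |f j| ≤ √(∑ i, f i ^ 2) :=
  Real.abs_le_sqrt (Finset.single_le_sum (fun i _ ↦ sq_nonneg (f i)) (Finset.mem_univ j))

theorem safe_variable_screening_general
    {r : ℕ} (x gstar g : Fin r → ℝ) (lam G : ℝ)
    (hsub : ∀ j, (x j ≠ 0 → gstar j = lam * Real.sign (x j)) ∧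
      (x j = 0 → |gstar j| ≤ lam))
    (hgap : Real.sqrt (∑ j, (gstar j - g j) ^ 2) ≤ G)
    (j : Fin r) (hj : |g j| + G < lam) :
    x j = 0 := by
  by_contra hx
  -- On the support of `x` the optimal dual sits on the boundary `|g⋆_j| = λ`, which the
  -- ball of radius `G` around `g` does not reach in coordinate `j`.
  have hboundary : |gstar j| = |lam| := by
    rw [(hsub j).1 hx, abs_mul, Real.abs_sign_of_ne_zero hx, mul_one]
  have hclose : |gstar j - g j| ≤ G :=
    (abs_apply_le_sqrt_sum_sq (fun i ↦ gstar i - g i) j).trans hgap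
  linarith [abs_sub_abs_le_abs_sub (gstar j) (g j), le_abs_self lam]

/-- Theorem 1(2) of the paper: if the optimal subgradient `g⋆ ∈ λ·∂‖·‖₁(x)` satisfies
`‖g⋆ - g‖₂ ≤ G` for an approximate dual `g`, and `|g_j| + G < λ`, then `x_j = 0`. -/
theorem safe_variable_screening
    {r : ℕ} (x gstar g : Fin r → ℝ) (lam G : ℝ) (hlam : 0 < lam) (hG : 0 ≤ G)
    (hsub : ∀ j, (x j ≠ 0 → gstar j = lam * Real.sign (x j)) ∧
      (x j = 0 → |gstar j| ≤ lam))
    (hgap : Real.sqrt (∑ j, (gstar j - g j) ^ 2) ≤ G)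
    (j : Fin r) (hj : |g j| + G < lam) :
    x j = 0 :=
  safe_variable_screening_general x gstar g lam G hsub hgap j hj
end

section
/- Let d : ℝᵐ → ℝ be ρ̲-strongly convex and differentiable with ρ̄-Lipschitz gradient, Y ⊆ ℝᵐ nonempty closed convex, and y⋆ the unique minimizer of d over Y. Then for every y ∈ Y, ‖y - y⋆‖ ≤ ((1 + ρ̄)/ρ̲)·‖y - proj_Y(y - ∇d(y))‖. -/
/-!
Strong convexity makes `∇d` strongly monotone: `ρ̲ ‖y - y⋆‖² ≤ ⟪∇d y - ∇d y⋆, y - y⋆⟫`.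
Write `p = proj_Y (y - ∇d y)` and split `y - y⋆ = (y - p) + (p - y⋆)`. The first part contributes
at most `ρ̄ ‖y - y⋆‖ ‖y - p‖` by the Lipschitz bound. For the second, first-order optimality of `y⋆`
(`⟪∇d y⋆, p - y⋆⟫ ≥ 0`) and the obtuse-angle characterisation of the projection `p` give
`⟪∇d y - ∇d y⋆, p - y⋆⟫ ≤ ⟪y - p, p - y⋆⟫ ≤ ‖y - p‖ ‖y - y⋆‖`. Divide by `‖y - y⋆‖`.
-/
open RealInnerProductSpace Set

section NormedSpace

variable {E : Type*} [NormedAddCommGroup E] [NormedSpace ℝ E]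
  {f : E → ℝ} {f' f'' : E →L[ℝ] ℝ} {a : E}

theorem ConvexOn.apply_sub_le_of_hasFDerivAt (hf : ConvexOn ℝ univ f) (hf' : HasFDerivAt f f' a)
    (b : E) : f' (b - a) ≤ f b - f a := by
  have hline : HasDerivAt (AffineMap.lineMap a b : ℝ →ᵃ[ℝ] E) (b - a) 0 := by
    simpa using AffineMap.hasDerivAt_lineMap (a := a) (b := b) (x := 0)
  have hslope := (hf.comp_affineMap (AffineMap.lineMap a b)).le_slope_of_hasDerivAt
    (mem_univ 0) (mem_univ 1) one_pos (hf'.comp_hasDerivAt_of_eq 0 hline (by simp))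
  simpa [slope_def_field] using hslope

theorem ConvexOn.nonneg_sub_apply_sub_of_hasFDerivAt {b : E} (hf : ConvexOn ℝ univ f)
    (ha : HasFDerivAt f f' a) (hb : HasFDerivAt f f'' b) : 0 ≤ (f'' - f') (b - a) := by
  have hab := hf.apply_sub_le_of_hasFDerivAt ha b
  have hba := hf.apply_sub_le_of_hasFDerivAt hb a
  rw [← neg_sub, map_neg] at hba
  simp only [sub_apply]
  linarith

end NormedSpace

section InnerProductSpace

variable {E : Type*} [NormedAddCommGroup E] [InnerProductSpace ℝ E]

theorem mul_norm_sub_sq_le_inner_sub_of_convexOn_sub_sq [CompleteSpace E] {f : E → ℝ} {ρ : ℝ}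
    (hf : ConvexOn ℝ univ (fun x => f x - (ρ / 2) * ‖x‖ ^ 2)) {a b fa fb : E}
    (ha : HasGradientAt f fa a) (hb : HasGradientAt f fb b) :
    ρ * ‖b - a‖ ^ 2 ≤ ⟪fb - fa, b - a⟫ := by
  have hderiv : ∀ {x fx : E}, HasGradientAt f fx x →
      HasFDerivAt (fun x => f x - (ρ / 2) * ‖x‖ ^ 2)
        (InnerProductSpace.toDual ℝ E fx - (ρ / 2) • (2 • innerSL ℝ x)) x := fun hx =>
    hx.hasFDerivAt.sub ((hasStrictFDerivAt_norm_sq _).hasFDerivAt.const_mul (ρ / 2))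
  have hmono := hf.nonneg_sub_apply_sub_of_hasFDerivAt (hderiv ha) (hderiv hb)
  simp only [sub_apply, InnerProductSpace.toDual_apply_apply, smul_apply, coe_innerSL_apply,
    real_inner_self_eq_norm_sq, nsmul_eq_mul, Nat.cast_ofNat, smul_eq_mul, inner_sub_left,
    inner_sub_right] at hmono ⊢
  rw [real_inner_comm b a] at hmono
  rw [norm_sub_sq_real]
  linarith

theorem IsMinOn.inner_nonneg_of_hasGradientAt [CompleteSpace E] {f : E → ℝ} {s : Set E}
    {x y g : E} (hmin : IsMinOn f s x) (hs : Convex ℝ s) (hx : x ∈ s) (hy : y ∈ s)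
    (hf : HasGradientAt f g x) : 0 ≤ ⟪g, y - x⟫ :=
  hmin.localize.hasFDerivWithinAt_nonneg hf.hasFDerivAt.hasFDerivWithinAt
    (sub_mem_posTangentConeAt_of_segment_subset (hs.segment_subset hx hy))

theorem inner_sub_le_zero_of_forall_norm_sub_le {K : Set E} (hK : Convex ℝ K) {z p w : E}
    (hp : p ∈ K) (hmin : ∀ w ∈ K, ‖z - p‖ ≤ ‖z - w‖) (hw : w ∈ K) : ⟪z - p, w - p⟫ ≤ 0 := by
  have : Nonempty K := ⟨⟨p, hp⟩⟩
  refine (norm_eq_iInf_iff_real_inner_le_zero hK hp).mp ?_ w hw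
  exact le_antisymm (le_ciInf fun w => hmin w w.2)
    (ciInf_le ⟨0, forall_mem_range.2 fun _ => norm_nonneg _⟩ (⟨p, hp⟩ : K))

theorem inner_sub_le_norm_mul_norm_of_inner_nonneg_of_inner_nonpos {x y p u v : E}
    (hu : 0 ≤ ⟪u, p - x⟫) (hv : ⟪y - v - p, x - p⟫ ≤ 0) :
    ⟪v - u, p - x⟫ ≤ ‖y - p‖ * ‖y - x‖ :=
  calc ⟪v - u, p - x⟫ ≤ ⟪y - p, p - x⟫ := by
        simp only [inner_sub_left, inner_sub_right] at hu hv ⊢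
        linarith
    _ = ⟪y - p, y - x⟫ - ‖y - p‖ ^ 2 := by
        rw [← sub_sub_sub_cancel_left x p y, inner_sub_right, real_inner_self_eq_norm_sq]
    _ ≤ ‖y - p‖ * ‖y - x‖ := by
        linarith [real_inner_le_norm (y - p) (y - x), sq_nonneg ‖y - p‖]

end InnerProductSpace

theorem le_div_mul_of_mul_sq_le_mul {ρ c r t : ℝ} (hρ : 0 < ρ) (hc : 0 ≤ c) (hr : 0 ≤ r)
    (ht : 0 ≤ t) (h : ρ * t ^ 2 ≤ c * r * t) : t ≤ c / ρ * r := by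
  rw [div_mul_eq_mul_div, le_div_iff₀ hρ]
  rcases ht.eq_or_lt with rfl | ht
  · simpa using mul_nonneg hc hr
  · nlinarith

theorem projected_gradient_error_bound_general
    {m : ℕ} (d : EuclideanSpace ℝ (Fin m) → ℝ) (ρlo ρhi : ℝ)
    (hρlo : 0 < ρlo) (hρhi : 0 < ρhi)
    (hsc : ConvexOn ℝ Set.univ (fun y => d y - (ρlo / 2) * ‖y‖ ^ 2))
    (hdiff : Differentiable ℝ d)
    (hLip : ∀ x y, ‖gradient d x - gradient d y‖ ≤ ρhi * ‖x - y‖)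
    (Y : Set (EuclideanSpace ℝ (Fin m)))
    (hYconv : Convex ℝ Y)
    (proj : EuclideanSpace ℝ (Fin m) → EuclideanSpace ℝ (Fin m))
    (hproj : ∀ z, proj z ∈ Y ∧ ∀ w ∈ Y, ‖z - proj z‖ ≤ ‖z - w‖)
    (ystar : EuclideanSpace ℝ (Fin m))
    (hystar : ystar ∈ Y) (hmin : ∀ y ∈ Y, d ystar ≤ d y)
    (y : EuclideanSpace ℝ (Fin m)) :
    ‖y - ystar‖ ≤ ((1 + ρhi) / ρlo) * ‖y - proj (y - gradient d y)‖ := by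
  set g := gradient d
  set p := proj (y - g y)
  obtain ⟨hpY, hpmin⟩ := hproj (y - g y)
  have hmono : ρlo * ‖y - ystar‖ ^ 2 ≤ ⟪g y - g ystar, y - ystar⟫ :=
    mul_norm_sub_sq_le_inner_sub_of_convexOn_sub_sq hsc (hdiff _).hasGradientAt
      (hdiff _).hasGradientAt
  have hopt : 0 ≤ ⟪g ystar, p - ystar⟫ :=
    (isMinOn_iff.mpr hmin).inner_nonneg_of_hasGradientAt hYconv hystar hpY
      (hdiff _).hasGradientAt
  have hproj_ineq : ⟪y - g y - p, ystar - p⟫ ≤ 0 :=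
    inner_sub_le_zero_of_forall_norm_sub_le hYconv hpY hpmin hystar
  have hcross : ⟪g y - g ystar, p - ystar⟫ ≤ ‖y - p‖ * ‖y - ystar‖ :=
    inner_sub_le_norm_mul_norm_of_inner_nonneg_of_inner_nonpos hopt hproj_ineq
  have hkey : ρlo * ‖y - ystar‖ ^ 2 ≤ (1 + ρhi) * ‖y - p‖ * ‖y - ystar‖ :=
    calc ρlo * ‖y - ystar‖ ^ 2 ≤ ⟪g y - g ystar, y - ystar⟫ := hmono
      _ = ⟪g y - g ystar, y - p⟫ + ⟪g y - g ystar, p - ystar⟫ := by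
        rw [← inner_add_right, sub_add_sub_cancel]
      _ ≤ ρhi * ‖y - ystar‖ * ‖y - p‖ + ‖y - p‖ * ‖y - ystar‖ := by
        gcongr ?_ + ?_
        exact (real_inner_le_norm _ _).trans
          (mul_le_mul_of_nonneg_right (hLip y ystar) (norm_nonneg _))
      _ = (1 + ρhi) * ‖y - p‖ * ‖y - ystar‖ := by ring
  exact le_div_mul_of_mul_sq_le_mul hρlo (by linarith) (norm_nonneg _) (norm_nonneg _) hkey

/-- Projected-gradient error bound (Eq. 13): if `d` is `ρ̲`-strongly convex with
`ρ̄`-Lipschitz gradient, `Y` is nonempty closed convex with minimizer `y⋆` of `d` over `Y`,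
then for every `y ∈ Y`, `‖y - y⋆‖ ≤ ((1 + ρ̄)/ρ̲) · ‖y - proj (y - ∇d y)‖`. -/
theorem projected_gradient_error_bound
    {m : ℕ} (d : EuclideanSpace ℝ (Fin m) → ℝ) (ρlo ρhi : ℝ)
    (hρlo : 0 < ρlo) (hρhi : 0 < ρhi)
    (hsc : ConvexOn ℝ Set.univ (fun y => d y - (ρlo / 2) * ‖y‖ ^ 2))
    (hdiff : Differentiable ℝ d)
    (hLip : ∀ x y, ‖gradient d x - gradient d y‖ ≤ ρhi * ‖x - y‖)
    (Y : Set (EuclideanSpace ℝ (Fin m)))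
    (hYne : Y.Nonempty) (hYc : IsClosed Y) (hYconv : Convex ℝ Y)
    (proj : EuclideanSpace ℝ (Fin m) → EuclideanSpace ℝ (Fin m))
    (hproj : ∀ z, proj z ∈ Y ∧ ∀ w ∈ Y, ‖z - proj z‖ ≤ ‖z - w‖)
    (ystar : EuclideanSpace ℝ (Fin m))
    (hystar : ystar ∈ Y) (hmin : ∀ y ∈ Y, d ystar ≤ d y)
    (y : EuclideanSpace ℝ (Fin m)) (hy : y ∈ Y) :
    ‖y - ystar‖ ≤ ((1 + ρhi) / ρlo) * ‖y - proj (y - gradient d y)‖ :=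
  projected_gradient_error_bound_general d ρlo ρhi hρlo hρhi hsc hdiff hLip Y hYconv proj hproj
    ystar hystar hmin y
end

section
/- Consider the convex program minimize f(θ) subject to g_i(θ) ≤ -ζ (i ∈ I) with f σ-strongly convex, each g_i L_i-Lipschitz and convex, ζ > 0, and suppose strong duality holds with optimal primal θ⋆ and optimal multipliers μ⋆_i ≥ 0. Fix an index k and let θ̄ be the optimizer of the problem with constraint k removed. If μ⋆_k ≤ ε/ζ with ε ≤ (σζ²/2)·min_i (1/L_i²), then g_k(θ̄) ≤ 0, i.e. θ̄ violates constraint k by at most ζ. -/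
set_option maxHeartbeats 1000000 in
/-- Corollary 1 of the paper: for the convex program `min f(θ) s.t. g_i(θ) ≤ -ζ` with
`f` `σ`-strongly convex, each `g_i` convex and `L_i`-Lipschitz, strong duality attained at
primal `θ⋆` and multipliers `μ⋆ ≥ 0`, if `μ⋆_k ≤ ε/ζ` with
`ε ≤ (σζ²/2)·min_i (1/L_i²)` and `θ̄` optimizes the problem with constraint `k` removed,
then `g_k(θ̄) ≤ 0`. -/
theorem small_multiplier_safe_removal
    {n : ℕ} {ι : Type*} [Fintype ι] [Nonempty ι]
    (f : EuclideanSpace ℝ (Fin n) → ℝ) (g : ι → EuclideanSpace ℝ (Fin n) → ℝ)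
    (σ ζ ε : ℝ) (L : ι → ℝ)
    (hσ : 0 < σ) (hζ : 0 < ζ) (hε : 0 ≤ ε) (hL : ∀ i, 0 < L i)
    (hsc : ConvexOn ℝ Set.univ (fun θ => f θ - (σ / 2) * ‖θ‖ ^ 2))
    (hgconv : ∀ i, ConvexOn ℝ Set.univ (g i))
    (hLip : ∀ i, ∀ x y, |g i x - g i y| ≤ L i * ‖x - y‖)
    (θstar : EuclideanSpace ℝ (Fin n))
    (hθstar_feas : ∀ i, g i θstar ≤ -ζ)
    (hθstar_min : ∀ θ, (∀ i, g i θ ≤ -ζ) → f θstar ≤ f θ)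
    (μstar : ι → ℝ) (hμ : ∀ i, 0 ≤ μstar i)
    (hstrong : ∀ θ, f θstar ≤ f θ + ∑ i, μstar i * (g i θ + ζ))
    (k : ι)
    (θbar : EuclideanSpace ℝ (Fin n))
    (hθbar_feas : ∀ i, i ≠ k → g i θbar ≤ -ζ)
    (hθbar_min : ∀ θ, (∀ i, i ≠ k → g i θ ≤ -ζ) → f θbar ≤ f θ)
    (hμk : μstar k ≤ ε / ζ)
    (hεcrit : ε ≤ (σ * ζ ^ 2 / 2) * ⨅ i, 1 / (L i) ^ 2) :
    g k θbar ≤ 0 := by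
  classical
  -- Strong convexity of f
  have hstrongconv : StrongConvexOn (Set.univ : Set (EuclideanSpace ℝ (Fin n))) σ f :=
    strongConvexOn_iff_convex.mpr hsc
  set d : ℝ := ‖θbar - θstar‖ with hd
  clear_value d
  have hd0 : 0 ≤ d := hd ▸ norm_nonneg _
  -- θ⋆ is feasible for the relaxed problem
  have hfle : f θbar ≤ f θstar := hθbar_min θstar (fun i _ => hθstar_feas i)
  set key : ℝ := f θstar - f θbar with hkey
  clear_value key
  have hkey0 : 0 ≤ key := by simp [hkey]; linarith
  -- strong convexity bound: key ≥ σ/2 * d²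
  have hmain : σ / 2 * d ^ 2 ≤ key := by
    -- for all t ∈ (0,1): (1-t) * (σ/2 * d²) ≤ key
    have hstep : ∀ t : ℝ, 0 < t → t < 1 → (1 - t) * (σ / 2 * d ^ 2) ≤ key := by
      intro t ht0 ht1
      have ha : (0:ℝ) ≤ 1 - t := by linarith
      have hb : (0:ℝ) ≤ t := le_of_lt ht0
      have hab : (1 - t) + t = 1 := by ring
      have hineq := hstrongconv.2 (Set.mem_univ θbar) (Set.mem_univ θstar) ha hb hab
      -- the combination point is feasible for the relaxed problem
      have hcomb : ∀ i, i ≠ k → g i ((1 - t) • θbar + t • θstar) ≤ -ζ := by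
        intro i hik
        have := (hgconv i).2 (Set.mem_univ θbar) (Set.mem_univ θstar) ha hb hab
        have h1 : g i θbar ≤ -ζ := hθbar_feas i hik
        have h2 : g i θstar ≤ -ζ := hθstar_feas i
        calc g i ((1 - t) • θbar + t • θstar)
            ≤ (1 - t) • g i θbar + t • g i θstar := this
          _ ≤ (1 - t) * (-ζ) + t * (-ζ) := by
              simp only [smul_eq_mul]
              have := mul_le_mul_of_nonneg_left h1 ha
              have := mul_le_mul_of_nonneg_left h2 hb
              nlinarith
          _ = -ζ := by ring
      have hopt : f θbar ≤ f ((1 - t) • θbar + t • θstar) := hθbar_min _ hcomb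
      simp only [smul_eq_mul] at hineq
      have hds : ‖θbar - θstar‖ = d := hd.symm
      rw [hds] at hineq
      nlinarith
    by_cases hdz : d = 0
    · simp [hdz]; linarith
    · have hdpos : 0 < d := lt_of_le_of_ne hd0 (Ne.symm hdz)
      have hD : 0 < σ / 2 * d ^ 2 := by positivity
      by_contra hcon
      push_neg at hcon
      set r : ℝ := key / (σ / 2 * d ^ 2) with hr
      have hr0 : 0 ≤ r := div_nonneg hkey0 (le_of_lt hD)
      have hr1 : r < 1 := (div_lt_one hD).mpr hcon
      have := hstep ((1 - r) / 2) (by linarith) (by linarith)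
      have h1r : 1 - (1 - r) / 2 = (r + 1) / 2 := by ring
      rw [h1r] at this
      have hkeyr : key = r * (σ / 2 * d ^ 2) := by
        rw [hr, div_mul_cancel₀ _ (ne_of_gt hD)]
      nlinarith
  -- strong duality bound: key ≤ μ⋆_k * (g_k(θ̄) + ζ)
  have hdual : key ≤ μstar k * (g k θbar + ζ) := by
    have h1 := hstrong θbar
    have h2 : ∑ i, μstar i * (g i θbar + ζ) ≤ μstar k * (g k θbar + ζ) := by
      rw [← Finset.add_sum_erase _ _ (Finset.mem_univ k)]
      have : ∑ i ∈ Finset.univ.erase k, μstar i * (g i θbar + ζ) ≤ 0 := by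
        apply Finset.sum_nonpos
        intro i hi
        have hik : i ≠ k := (Finset.mem_erase.mp hi).1
        have := hθbar_feas i hik
        have := hμ i
        nlinarith
      linarith
    simp [hkey]; linarith
  set v : ℝ := g k θbar + ζ with hv
  clear_value v
  by_cases hvpos : v ≤ 0
  · simp [hv] at hvpos; linarith
  push_neg at hvpos
  -- Lipschitz bound: v ≤ L k * d
  have hlip : v ≤ L k * d := by
    have h1 := hLip k θbar θstar
    rw [← hd] at h1
    have h2 : g k θbar - g k θstar ≤ L k * d := le_trans (le_abs_self _) h1
    have := hθstar_feas k
    simp only [hv]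
    linarith
  have hLk := hL k
  -- d ≥ v / L k, so d² ≥ v² / (L k)²
  have hd2 : v ^ 2 / (L k) ^ 2 ≤ d ^ 2 := by
    rw [div_le_iff₀ (by positivity)]
    nlinarith
  -- ε bound: ε ≤ σζ²/2 * (1/(L k)²)
  have hinf : (⨅ i, 1 / (L i) ^ 2 : ℝ) ≤ 1 / (L k) ^ 2 :=
    ciInf_le (Set.Finite.bddBelow (Set.finite_range _)) k
  have hεk : ε ≤ σ * ζ ^ 2 / 2 * (1 / (L k) ^ 2) := by
    calc ε ≤ σ * ζ ^ 2 / 2 * ⨅ i, 1 / (L i) ^ 2 := hεcrit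
      _ ≤ σ * ζ ^ 2 / 2 * (1 / (L k) ^ 2) := by
          apply mul_le_mul_of_nonneg_left hinf (by positivity)
  -- μ⋆_k bound
  have hμkb : μstar k ≤ ε / ζ := hμk
  -- combine: σ/2 * v²/(L k)² ≤ key ≤ μ⋆_k * v ≤ (ε/ζ) v
  have hchain : σ / 2 * (v ^ 2 / (L k) ^ 2) ≤ ε / ζ * v := by
    have h1 : σ / 2 * (v ^ 2 / (L k) ^ 2) ≤ σ / 2 * d ^ 2 := by
      apply mul_le_mul_of_nonneg_left hd2 (by positivity)
    have h2 : μstar k * v ≤ ε / ζ * v := by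
      apply mul_le_mul_of_nonneg_right hμkb (le_of_lt hvpos)
    calc σ / 2 * (v ^ 2 / (L k) ^ 2) ≤ key := le_trans h1 hmain
      _ ≤ μstar k * v := hdual
      _ ≤ ε / ζ * v := h2
  -- conclude v ≤ ζ
  have hLk2 : (0:ℝ) < (L k) ^ 2 := by positivity
  have hεk' : ε * (L k) ^ 2 ≤ σ * ζ ^ 2 / 2 := by
    rw [show σ * ζ ^ 2 / 2 * (1 / (L k) ^ 2) = (σ * ζ ^ 2 / 2) / (L k) ^ 2 by ring] at hεk
    exact (le_div_iff₀ hLk2).mp hεk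
  have hεζ : ε / ζ * v ≤ σ * ζ / (2 * (L k) ^ 2) * v := by
    apply mul_le_mul_of_nonneg_right _ (le_of_lt hvpos)
    rw [div_le_div_iff₀ hζ (by positivity)]
    nlinarith [hεk']
  have hfinal : σ / 2 * (v ^ 2 / (L k) ^ 2) ≤ σ * ζ / (2 * (L k) ^ 2) * v :=
    le_trans hchain hεζ
  have hvζ : v ≤ ζ := by
    have hLkne : (L k) ^ 2 ≠ 0 := ne_of_gt hLk2
    have h := mul_le_mul_of_nonneg_right hfinal
      (show (0:ℝ) ≤ 2 * (L k) ^ 2 by positivity)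
    have e1 : σ / 2 * (v ^ 2 / (L k) ^ 2) * (2 * (L k) ^ 2) = σ * v ^ 2 := by
      field_simp
    have e2 : σ * ζ / (2 * (L k) ^ 2) * v * (2 * (L k) ^ 2) = σ * ζ * v := by
      field_simp
    rw [e1, e2] at h
    have hc : (0:ℝ) < σ * v := mul_pos hσ hvpos
    have h3 : (σ * v) * v ≤ (σ * v) * ζ := by nlinarith [h]
    exact le_of_mul_le_mul_left h3 hc
  simp only [hv] at hvζ
  linarith
end
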